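/- Let x > 0, β > 0, v ∈ ℝ^N with y = x + βv > 0 componentwise, set z = P(y), and let ρ > 0, w ∈ ℝ^N nonnegative, S^- = {j : v_j < 0}, S^+ = {j : v_j > 0}, B^- = max{ρ + ∑_{j ∈ S^-} z_j, ∑_{j ∈ S^-} w_j}, B^+ = min{∑_{j ∈ S^+} z_j, ∑_{j ∈ S^+} w_j} (with max_{j ∈ S^-}(−v_j/y_j) and min_{j ∈ S^+}(v_j/y_j) interpreted as 0 when the corresponding set is empty). Assume the decreasing condition β · max_{j ∈ S^-}(−v_j/y_j) · B^- − β · min_{j ∈ S^+}(v_j/y_j) · B^+ + β ∑_{j=1}^N v_j < I_A^b(y) − I_A^b(z) holds. If for some index j and some ε₁ > 0 one has f_j(y) > 1 + ε₁ and z_j < x_j, then the decrease of the objective is quantitatively bounded below: I_A^b(x) − I_A^b(z) ≥ ρ ε₁ / (1 + ε₁). -/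
import Mathlib

open Finset Filter Topology

noncomputable def dd {M N : ℕ} (A : Fin M → Fin N → ℝ) (x : Fin N → ℝ) (i : Fin M) : ℝ :=
  ∑ j, A i j * x j

noncomputable def ff {M N : ℕ} (A : Fin M → Fin N → ℝ) (b : Fin M → ℝ) (x : Fin N → ℝ) (j : Fin N) : ℝ :=
  ∑ i, A i j * b i / dd A x i

noncomputable def EMop {M N : ℕ} (A : Fin M → Fin N → ℝ) (b : Fin M → ℝ) (x : Fin N → ℝ) : Fin N → ℝ :=
  fun j => x j * ff A b x j

noncomputable def KL {N : ℕ} (u v : Fin N → ℝ) : ℝ :=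
  (∑ j, u j * Real.log (u j / v j)) - ∑ j, (u j - v j)

noncomputable def IAb {M N : ℕ} (A : Fin M → Fin N → ℝ) (b : Fin M → ℝ) (x : Fin N → ℝ) : ℝ :=
  (∑ i, b i * Real.log (b i / dd A x i)) - ∑ i, (b i - dd A x i)

noncomputable def finSup0 {ι : Type*} (s : Finset ι) (g : ι → ℝ) : ℝ :=
  if h : s.Nonempty then s.sup' h g else 0

noncomputable def finInf0 {ι : Type*} (s : Finset ι) (g : ι → ℝ) : ℝ :=
  if h : s.Nonempty then s.inf' h g else 0

lemma dd_pos {M N : ℕ} (A : Fin M → Fin N → ℝ) (hA : ∀ i j, 0 ≤ A i j)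
    (hrow : ∀ i, ∃ j, 0 < A i j) (x : Fin N → ℝ) (hx : ∀ j, 0 < x j) (i : Fin M) :
    0 < dd A x i := by
  obtain ⟨j, hj⟩ := hrow i
  exact Finset.sum_pos' (fun k _ => mul_nonneg (hA i k) (hx k).le)
    ⟨j, Finset.mem_univ _, mul_pos hj (hx j)⟩

lemma col_pos {M N : ℕ} (A : Fin M → Fin N → ℝ) (hA : ∀ i j, 0 ≤ A i j)
    (hcol : ∀ j, ∑ i, A i j = 1) (j : Fin N) : ∃ i, 0 < A i j := by
  by_contra h
  push_neg at h
  have h0 : ∑ i, A i j = 0 := Finset.sum_eq_zero fun i _ => le_antisymm (h i) (hA i j)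
  rw [hcol j] at h0; norm_num at h0

lemma ff_pos {M N : ℕ} (A : Fin M → Fin N → ℝ) (b : Fin M → ℝ) (hA : ∀ i j, 0 ≤ A i j)
    (hcol : ∀ j, ∑ i, A i j = 1) (hrow : ∀ i, ∃ j, 0 < A i j) (hb : ∀ i, 0 < b i)
    (x : Fin N → ℝ) (hx : ∀ j, 0 < x j) (j : Fin N) : 0 < ff A b x j := by
  obtain ⟨i, hi⟩ := col_pos A hA hcol j
  exact Finset.sum_pos' (fun k _ => div_nonneg (mul_nonneg (hA k j) (hb k).le)
      (dd_pos A hA hrow x hx k).le)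
    ⟨i, Finset.mem_univ _, div_pos (mul_pos hi (hb i)) (dd_pos A hA hrow x hx i)⟩

lemma sum_dd {M N : ℕ} (A : Fin M → Fin N → ℝ) (hcol : ∀ j, ∑ i, A i j = 1)
    (x : Fin N → ℝ) : ∑ i, dd A x i = ∑ j, x j := by
  unfold dd
  rw [Finset.sum_comm]
  refine Finset.sum_congr rfl fun j _ => ?_
  rw [← Finset.sum_mul, hcol, one_mul]

lemma swap_sum {M N : ℕ} (A : Fin M → Fin N → ℝ) (b : Fin M → ℝ) (y v : Fin N → ℝ) (β : ℝ) :
    ∑ i, b i * (β * dd A v i / dd A y i) = β * ∑ j, v j * ff A b y j := by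
  have step : ∀ i : Fin M, b i * (β * dd A v i / dd A y i)
      = ∑ j, β * (v j * (A i j * b i / dd A y i)) := by
    intro i
    rw [show dd A v i = ∑ j, A i j * v j from rfl, Finset.mul_sum, Finset.sum_div,
      Finset.mul_sum]
    exact Finset.sum_congr rfl fun j _ => by ring
  rw [Finset.sum_congr rfl fun i _ => step i, Finset.sum_comm, Finset.mul_sum]
  refine Finset.sum_congr rfl fun j _ => ?_
  rw [ff, Finset.mul_sum, Finset.mul_sum]

set_option maxHeartbeats 1000000 in
theorem stmt_12
    (M N : ℕ) (hM : 0 < M) (hN : 0 < N)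
    (A : Fin M → Fin N → ℝ) (b : Fin M → ℝ)
    (hA : ∀ i j, 0 ≤ A i j)
    (hcol : ∀ j, ∑ i, A i j = 1)
    (hrow : ∀ i, ∃ j, 0 < A i j)
    (hb : ∀ i, 0 < b i)
    (x v : Fin N → ℝ) (β : ℝ)
    (hx : ∀ j, 0 < x j) (hβ : 0 < β)
    (y : Fin N → ℝ) (hy : y = fun j => x j + β * v j)
    (hypos : ∀ j, 0 < y j)
    (z : Fin N → ℝ) (hz : z = EMop A b y)
    (ρ : ℝ) (hρ : 0 < ρ)
    (w : Fin N → ℝ) (hw : ∀ j, 0 ≤ w j)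
    (Sm Sp : Finset (Fin N))
    (hSm : Sm = Finset.univ.filter (fun j => v j < 0))
    (hSp : Sp = Finset.univ.filter (fun j => 0 < v j))
    (Bm Bp : ℝ)
    (hBm : Bm = max (ρ + ∑ j ∈ Sm, z j) (∑ j ∈ Sm, w j))
    (hBp : Bp = min (∑ j ∈ Sp, z j) (∑ j ∈ Sp, w j))
    (hdec : β * finSup0 Sm (fun j => -v j / y j) * Bm
          - β * finInf0 Sp (fun j => v j / y j) * Bp
          + β * (∑ j, v j) < IAb A b y - IAb A b z)
    (j : Fin N) (ε₁ : ℝ) (hε : 0 < ε₁)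
    (hf : 1 + ε₁ < ff A b y j) (hzx : z j < x j) :
    IAb A b x - IAb A b z ≥ ρ * ε₁ / (1 + ε₁) := by
  set sup := finSup0 Sm (fun j => -v j / y j) with hsup
  set inf := finInf0 Sp (fun j => v j / y j) with hinf
  have hdy : ∀ i, 0 < dd A y i := dd_pos A hA hrow y hypos
  have hdx : ∀ i, 0 < dd A x i := dd_pos A hA hrow x hx
  have hffy : ∀ k, 0 < ff A b y k := ff_pos A b hA hcol hrow hb y hypos
  have hzz : ∀ k, z k = y k * ff A b y k := by intro k; rw [hz]; rfl
  have hzpos : ∀ k, 0 < z k := fun k => (hzz k) ▸ mul_pos (hypos k) (hffy k)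
  have hddy : ∀ i, dd A y i = dd A x i + β * dd A v i := by
    intro i
    simp only [dd, hy, mul_add, Finset.sum_add_distrib, Finset.mul_sum]
    congr 1
    exact Finset.sum_congr rfl fun k _ => by ring
  -- Step 1 : I(x) - I(y) ≥ β ∑ v f - β ∑ v
  have hlog : ∀ i, b i * (β * dd A v i / dd A y i)
      ≤ b i * Real.log (b i / dd A x i) - b i * Real.log (b i / dd A y i) := by
    intro i
    have h1 := Real.log_le_sub_one_of_pos (div_pos (hdx i) (hdy i))
    rw [Real.log_div (hdx i).ne' (hdy i).ne'] at h1
    rw [Real.log_div (hb i).ne' (hdx i).ne', Real.log_div (hb i).ne' (hdy i).ne']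
    have hdv : β * dd A v i = dd A y i - dd A x i := by rw [hddy i]; ring
    have h2 : dd A x i / dd A y i - 1 = -((dd A y i - dd A x i) / dd A y i) := by
      rw [← neg_div, neg_sub, sub_div, div_self (hdy i).ne']
    have h3 : (dd A y i - dd A x i) / dd A y i
        ≤ Real.log (dd A y i) - Real.log (dd A x i) := by linarith
    calc b i * (β * dd A v i / dd A y i)
        = b i * ((dd A y i - dd A x i) / dd A y i) := by rw [hdv]
      _ ≤ b i * (Real.log (dd A y i) - Real.log (dd A x i)) :=
          mul_le_mul_of_nonneg_left h3 (hb i).le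
      _ = b i * (Real.log (b i) - Real.log (dd A x i))
          - b i * (Real.log (b i) - Real.log (dd A y i)) := by ring
  have hsum1 : ∑ i, b i * (β * dd A v i / dd A y i)
      ≤ ∑ i, (b i * Real.log (b i / dd A x i) - b i * Real.log (b i / dd A y i)) :=
    Finset.sum_le_sum fun i _ => hlog i
  rw [swap_sum, Finset.sum_sub_distrib] at hsum1
  have hxy : ∑ k, x k - ∑ k, y k = -(β * ∑ k, v k) := by
    simp only [hy, Finset.sum_add_distrib, Finset.mul_sum]
    ring
  have h1 : IAb A b x - IAb A b y ≥ β * (∑ k, v k * ff A b y k) - β * ∑ k, v k := by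
    unfold IAb
    rw [Finset.sum_sub_distrib, Finset.sum_sub_distrib, sum_dd A hcol x, sum_dd A hcol y]
    linarith
  -- index j facts
  have hyx : (1 + ε₁) * y j < x j := by
    have h0 : (1 + ε₁) * y j < y j * ff A b y j := by nlinarith [hypos j]
    rw [← hzz j] at h0
    linarith
  have hvj : β * v j = y j - x j := by rw [hy]; ring
  have hvneg : v j < 0 := by nlinarith [hypos j]
  have hjSm : j ∈ Sm := by rw [hSm]; simp [hvneg]
  have hSmne : Sm.Nonempty := ⟨j, hjSm⟩
  have hsup' : sup = Sm.sup' hSmne (fun j => -v j / y j) := by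
    rw [hsup]; unfold finSup0; rw [dif_pos hSmne]
  have hsup_ge : ∀ k ∈ Sm, -v k / y k ≤ sup := fun k hk => hsup' ▸ Finset.le_sup' (fun j => -v j / y j) hk
  have hsup_lb : ε₁ < β * sup := by
    have h := hsup_ge j hjSm
    have h2 : β * (-v j / y j) = (x j - y j) / y j := by
      rw [mul_div_assoc']
      congr 1
      linarith
    have h3 : ε₁ < (x j - y j) / y j := by
      rw [lt_div_iff₀ (hypos j)]
      nlinarith
    nlinarith [mul_le_mul_of_nonneg_left h hβ.le]
  have hbsup_pos : 0 ≤ β * sup := le_of_lt (hε.trans hsup_lb)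
  -- bounds on the two partial sums
  have hBound_m : -(sup * ∑ k ∈ Sm, z k) ≤ ∑ k ∈ Sm, (v k / y k) * z k := by
    rw [Finset.mul_sum, ← Finset.sum_neg_distrib]
    refine Finset.sum_le_sum fun k hk => ?_
    have h := hsup_ge k hk
    rw [neg_div] at h
    have h2 : -sup ≤ v k / y k := by linarith
    calc -(sup * z k) = (-sup) * z k := by ring
      _ ≤ (v k / y k) * z k := mul_le_mul_of_nonneg_right h2 (hzpos k).le
  have hBound_p : inf * Bp ≤ ∑ k ∈ Sp, (v k / y k) * z k := by
    by_cases hSpne : Sp.Nonempty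
    · have hinf' : inf = Sp.inf' hSpne (fun j => v j / y j) := by
        rw [hinf]; unfold finInf0; rw [dif_pos hSpne]
      have hinf_le : ∀ k ∈ Sp, inf ≤ v k / y k := fun k hk => hinf' ▸ Finset.inf'_le (fun j => v j / y j) hk
      have hinf_nonneg : 0 ≤ inf := by
        obtain ⟨k, hk, hkeq⟩ := Finset.exists_mem_eq_inf' hSpne (fun j => v j / y j)
        have hvk : 0 < v k := by rw [hSp] at hk; simpa using hk
        rw [hinf', hkeq]
        exact (div_pos hvk (hypos k)).le
      calc inf * Bp ≤ inf * ∑ k ∈ Sp, z k :=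
            mul_le_mul_of_nonneg_left (hBp ▸ min_le_left _ _) hinf_nonneg
        _ = ∑ k ∈ Sp, inf * z k := Finset.mul_sum _ _ _
        _ ≤ ∑ k ∈ Sp, (v k / y k) * z k :=
            Finset.sum_le_sum fun k hk =>
              mul_le_mul_of_nonneg_right (hinf_le k hk) (hzpos k).le
    · rw [Finset.not_nonempty_iff_eq_empty] at hSpne
      have hinf0 : inf = 0 := by rw [hinf, hSpne]; simp [finInf0]
      simp [hSpne, hinf0]
  -- splitting the sum
  have hdisj : Disjoint Sm Sp := by
    rw [hSm, hSp, Finset.disjoint_left]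
    intro a ha hb'
    simp only [Finset.mem_filter] at ha hb'
    linarith [ha.2, hb'.2]
  have hsplit : ∑ k, (v k / y k) * z k
      = ∑ k ∈ Sm, (v k / y k) * z k + ∑ k ∈ Sp, (v k / y k) * z k := by
    rw [← Finset.sum_union hdisj]
    refine (Finset.sum_subset (Finset.subset_univ _) ?_).symm
    intro k _ hk
    rw [Finset.mem_union, hSm, hSp] at hk
    push_neg at hk
    simp only [Finset.mem_filter, Finset.mem_univ, true_and] at hk
    have hv0 : v k = 0 := le_antisymm (not_lt.mp hk.2) (not_lt.mp hk.1)
    simp [hv0]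
  have h3 : ∑ k, v k * ff A b y k = ∑ k, (v k / y k) * z k := by
    refine Finset.sum_congr rfl fun k _ => ?_
    rw [hzz k, div_mul_eq_mul_div, eq_div_iff (hypos k).ne']
    ring
  -- assembly
  have hA1 : IAb A b x - IAb A b y
      ≥ β * (∑ k, (v k / y k) * z k) - β * ∑ k, v k := by rw [← h3]; exact h1
  have hA2 : β * (∑ k, (v k / y k) * z k)
      ≥ -(β * sup * (∑ k ∈ Sm, z k)) + β * inf * Bp := by
    calc β * (∑ k, (v k / y k) * z k)
        ≥ β * (-(sup * ∑ k ∈ Sm, z k) + inf * Bp) := by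
          rw [hsplit]
          exact mul_le_mul_of_nonneg_left (by linarith) hβ.le
      _ = -(β * sup * (∑ k ∈ Sm, z k)) + β * inf * Bp := by ring
  have hA3 : β * sup * Bm ≥ β * sup * ρ + β * sup * (∑ k ∈ Sm, z k) := by
    calc β * sup * Bm ≥ β * sup * (ρ + ∑ k ∈ Sm, z k) :=
          mul_le_mul_of_nonneg_left (hBm ▸ le_max_left _ _) hbsup_pos
      _ = β * sup * ρ + β * sup * (∑ k ∈ Sm, z k) := by ring
  have hA4 : ρ * ε₁ < β * sup * ρ := by nlinarith
  have hA5 : ρ * ε₁ / (1 + ε₁) ≤ ρ * ε₁ := div_le_self (by positivity) (by linarith)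
  linarith only [hA1, hA2, hA3, hA4, hA5, hdec]
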